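/- For any FST M (derived from a pattern regexp e) that emits no output before reading input, the Mealy machine computed by subsetTC performs complete regexp matching of e: for every w ∈ Σ*, its output on w is the union over all decompositions w = w'w'' of B(e)(w''). -/

import Mathlib

/-!
After reading `w`, the state of `subsetT` started in `ε(I)` is the set of states reachable from
`I` by reading `w`, so its output on the next letter `a` is `B(M)(w·a)`. The extra `ε(I)` that
`T'` adds at every step restarts such a run at every position: the state of `subsetTC` after `w`
is the union, over all suffixes `v` of `w`, of the `subsetT` states after `v`. As `G` commutes
with unions of states, the output of `subsetTC` on `w` is the union of `B(M)(v) = B(e)(v)` over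
the nonempty suffixes `v` of `w`, and the empty suffix adds nothing since `B(e)(ε) = ∅`.
-/

open Classical

/-- The behaviour of a pattern regexp over `U = σ × (γ ∪ {ε})` (encoded as `σ × Option γ`):
`B(e)(w·a)` is the set of outputs `g` such that some word `u·(a,g)` in the language of `e`
has input projection `w·a`.  On the empty word it is empty (no letter of `U` has `ε` input). -/
def rBeh {σ γ : Type} (e : RegularExpression (σ × Option γ)) (w : List σ) : Set γ :=
  {g | ∃ (u : List (σ × Option γ)) (a : σ),
    w = u.map Prod.fst ++ [a] ∧ u ++ [(a, some g)] ∈ e.matches'}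

/-- The behaviour as a *partial* function: defined exactly on input projections of words in
the language of `e`. -/
noncomputable def pBeh {σ γ : Type} (e : RegularExpression (σ × Option γ)) :
    List σ → Option (Set γ) := fun w =>
  if (∃ u ∈ e.matches', u.map Prod.fst = w) then some (rBeh e w) else none

/-- A finite-state transducer: a nondeterministic machine reading input symbols from `σ`
(or `ε`, encoded `none`) and possibly emitting output symbols from `γ`. -/
structure FST (Q : Type) (σ : Type) (γ : Type) where
  step : Q → Option σ → Option γ → Q → Prop
  I : Set Q
  F : Set Q

namespace FST

variable {Q σ γ : Type} (M : FST Q σ γ)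

/-- One ε-transition (possibly with output). -/
def EpsStep (p q : Q) : Prop := ∃ g, M.step p none g q

/-- `q` is in the ε-closure of `p`. -/
def EpsCl (p q : Q) : Prop := Relation.ReflTransGen M.EpsStep p q

/-- ε-closure of a set of states. -/
def epsClSet (S : Set Q) : Set Q := {q | ∃ p ∈ S, M.EpsCl p q}

/-- `Reads p w q`: from `p` the machine may reach `q` reading the input word `w`,
with ε-transitions interleaved anywhere. -/
inductive Reads : Q → List σ → Q → Prop
  | refl (p : Q) : Reads p [] p
  | eps {p q r : Q} {w : List σ} : M.EpsStep p q → Reads q w r → Reads p w r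
  | cons {p q r : Q} {a : σ} {w : List σ} (g : Option γ) :
      M.step p (some a) g q → Reads q w r → Reads p (a :: w) r

/-- `B(p)(ε)`: outputs emittable from `p` by ε-transitions only. -/
def behNil (p : Q) : Set γ := {g | ∃ q r, M.EpsCl p q ∧ M.step q none (some g) r}

/-- The behaviour of state `p`: `B(p)(ε)` is `behNil p`, and `B(p)(w·a)` is the set of outputs
emitted on the transition reading the final `a` or by ε-transitions immediately afterwards. -/
def beh (p : Q) (w : List σ) : Set γ :=
  {g | (w = [] ∧ g ∈ M.behNil p) ∨
    ∃ w' a, w = w' ++ [a] ∧ ∃ (g' : Option γ) (q r : Q),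
      M.Reads p w' q ∧ M.step q (some a) g' r ∧ (some g = g' ∨ g ∈ M.behNil r)}

/-- The behaviour of the transducer: the union of the behaviours of its initial states. -/
def machineBeh (w : List σ) : Set γ := ⋃ i ∈ M.I, M.beh i w

/-- Transition function `T` of the subset construction `subsetT`. -/
def Tfun (S : Set Q) (a : σ) : Set Q :=
  M.epsClSet {q | ∃ p ∈ S, ∃ g, M.step p (some a) g q}

/-- Output function `G` of the subset construction `subsetT`. -/
def Gfun (S : Set Q) (a : σ) : Set γ :=
  {g | ∃ p ∈ S, ∃ q, M.step p (some a) (some g) q} ∪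
  {g | ∃ p ∈ M.Tfun S a, ∃ q ∈ M.Tfun S a, M.step p none (some g) q}

/-- Iterating `T` along a word. -/
def runT (S : Set Q) (w : List σ) : Set Q := w.foldl M.Tfun S

/-- The behaviour of the state `S` of the Mealy machine `subsetT M`:
nothing is emitted on the empty word, and on `w·a` the output is `G(runT S w, a)`. -/
def subsetBeh (S : Set Q) (w : List σ) : Set γ :=
  {g | ∃ w' a, w = w' ++ [a] ∧ g ∈ M.Gfun (M.runT S w') a}

/-- Transition function `T'` of the modified subset construction `subsetTC`,
which adds the initial closure to every transition target. -/
def TCfun (S : Set Q) (a : σ) : Set Q := M.Tfun S a ∪ M.epsClSet M.I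

/-- Iterating `T'` along a word. -/
def runTC (S : Set Q) (w : List σ) : Set Q := w.foldl M.TCfun S

/-- The behaviour of the Mealy machine computed by `subsetTC`, from its initial state `ε(I)`. -/
def subsetTCBeh (w : List σ) : Set γ :=
  {g | ∃ w' a, w = w' ++ [a] ∧ g ∈ M.Gfun (M.runTC (M.epsClSet M.I) w') a}

def readOutput (p : Q) (a : σ) : Set γ :=
  {g | ∃ (g' : Option γ) (q : Q), M.step p (some a) g' q ∧ (some g = g' ∨ g ∈ M.behNil q)}

variable {M}

theorem mem_epsClSet_of_epsStep {S : Set Q} {p q : Q} (hp : p ∈ M.epsClSet S)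
    (h : M.EpsStep p q) : q ∈ M.epsClSet S :=
  let ⟨r, hr, hrp⟩ := hp
  ⟨r, hr, hrp.tail h⟩

variable (M)

theorem Gfun_eq_biUnion (S : Set Q) (a : σ) : M.Gfun S a = ⋃ p ∈ S, M.readOutput p a := by
  ext g
  simp only [Set.mem_iUnion, exists_prop]
  constructor
  · rintro (⟨p, hp, q, hpq⟩ | ⟨p, ⟨r, ⟨p₀, hp₀, g', hp₀r⟩, hrp⟩, q, -, hpq⟩)
    · exact ⟨p, hp, some g, q, hpq, Or.inl rfl⟩
    · exact ⟨p₀, hp₀, g', r, hp₀r, Or.inr ⟨p, q, hrp, hpq⟩⟩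
  · rintro ⟨p, hp, g', q, hpq, rfl | ⟨r, s, hqr, hrs⟩⟩
    · exact Or.inl ⟨p, hp, q, hpq⟩
    · have hr : r ∈ M.Tfun S a := ⟨q, ⟨p, hp, g', hpq⟩, hqr⟩
      exact Or.inr ⟨r, hr, s, mem_epsClSet_of_epsStep hr ⟨some g, hrs⟩, hrs⟩

theorem Gfun_iUnion {ι : Sort*} (S : ι → Set Q) (a : σ) :
    M.Gfun (⋃ i, S i) a = ⋃ i, M.Gfun (S i) a := by
  simp only [Gfun_eq_biUnion, Set.biUnion_iUnion]

theorem Tfun_iUnion {ι : Sort*} (S : ι → Set Q) (a : σ) :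
    M.Tfun (⋃ i, S i) a = ⋃ i, M.Tfun (S i) a := by
  ext q
  simp only [Tfun, epsClSet, Set.mem_iUnion, Set.mem_ofPred_eq]
  grind

theorem runT_append_singleton (S : Set Q) (w : List σ) (a : σ) :
    M.runT S (w ++ [a]) = M.Tfun (M.runT S w) a := by
  simp [runT]

theorem runTC_append_singleton (S : Set Q) (w : List σ) (a : σ) :
    M.runTC S (w ++ [a]) = M.TCfun (M.runTC S w) a := by
  simp [runTC]

namespace Reads

variable {M}

theorem append {p q r : Q} {u v : List σ} (h₁ : M.Reads p u q) (h₂ : M.Reads q v r) :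
    M.Reads p (u ++ v) r := by
  induction h₁ with
  | refl => exact h₂
  | eps hpq _ ih => exact eps hpq (ih h₂)
  | cons g hpq _ ih => exact cons g hpq (ih h₂)

theorem exists_of_append {p r : Q} {u v : List σ} (h : M.Reads p (u ++ v) r) :
    ∃ q, M.Reads p u q ∧ M.Reads q v r := by
  generalize huv : u ++ v = w at h
  induction h generalizing u with
  | refl p =>
    obtain ⟨rfl, rfl⟩ := List.append_eq_nil_iff.mp huv
    exact ⟨p, refl p, refl p⟩
  | eps hpq _ ih =>
    obtain ⟨q, h₁, h₂⟩ := ih huv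
    exact ⟨q, eps hpq h₁, h₂⟩
  | @cons p q r a w g hpq hqr ih =>
    cases u with
    | nil =>
      rw [List.nil_append] at huv
      exact ⟨p, refl p, huv ▸ cons g hpq hqr⟩
    | cons b u =>
      rw [List.cons_append, List.cons.injEq] at huv
      obtain ⟨rfl, huv⟩ := huv
      obtain ⟨q', h₁, h₂⟩ := ih huv
      exact ⟨q', cons g hpq h₁, h₂⟩

theorem append_iff {p r : Q} {u v : List σ} :
    M.Reads p (u ++ v) r ↔ ∃ q, M.Reads p u q ∧ M.Reads q v r :=
  ⟨exists_of_append, fun ⟨_, h₁, h₂⟩ => h₁.append h₂⟩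

theorem nil_iff {p q : Q} : M.Reads p [] q ↔ M.EpsCl p q := by
  constructor
  · generalize hw : ([] : List σ) = w
    intro h
    induction h with
    | refl => exact .refl
    | eps hpq _ ih => exact .head hpq (ih hw)
    | cons => simp at hw
  · intro h
    induction h using Relation.ReflTransGen.head_induction_on with
    | refl => exact refl q
    | head hpq _ ih => exact eps hpq ih

theorem singleton_iff {p q : Q} {a : σ} :
    M.Reads p [a] q ↔ ∃ p' g r, M.EpsCl p p' ∧ M.step p' (some a) g r ∧ M.EpsCl r q := by
  constructor
  · generalize hw : [a] = w
    intro h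
    induction h with
    | refl => simp at hw
    | eps hpq _ ih =>
      obtain ⟨p', g, r, hpp', hp'r, hrq⟩ := ih hw
      exact ⟨p', g, r, .head hpq hpp', hp'r, hrq⟩
    | cons g hpq hqr =>
      obtain ⟨rfl, rfl⟩ := List.cons_eq_cons.mp hw
      exact ⟨_, g, _, .refl, hpq, nil_iff.mp hqr⟩
  · rintro ⟨p', g, r, hpp', hp'r, hrq⟩
    exact (nil_iff.mpr hpp').append (cons g hp'r (nil_iff.mpr hrq))

theorem append_singleton_iff {p q : Q} {w : List σ} {a : σ} :
    M.Reads p (w ++ [a]) q ↔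
      ∃ p' g r, M.Reads p w p' ∧ M.step p' (some a) g r ∧ M.EpsCl r q := by
  rw [append_iff]
  constructor
  · rintro ⟨p₁, hpp₁, hp₁q⟩
    obtain ⟨p', g, r, hp₁p', hp'r, hrq⟩ := singleton_iff.mp hp₁q
    exact ⟨p', g, r, by simpa using hpp₁.append (nil_iff.mpr hp₁p'), hp'r, hrq⟩
  · rintro ⟨p', g, r, hpp', hp'r, hrq⟩
    exact ⟨p', hpp', singleton_iff.mpr ⟨p', g, r, .refl, hp'r, hrq⟩⟩

end Reads

theorem runT_epsClSet (S : Set Q) (w : List σ) :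
    M.runT (M.epsClSet S) w = {q | ∃ i ∈ S, M.Reads i w q} := by
  induction w using List.reverseRecOn with
  | nil => simp [runT, epsClSet, Reads.nil_iff]
  | append_singleton w a ih =>
    rw [runT_append_singleton, ih]
    ext q
    simp only [Reads.append_singleton_iff, Tfun, epsClSet, Set.mem_ofPred_eq]
    grind

theorem beh_append_singleton (p : Q) (w : List σ) (a : σ) :
    M.beh p (w ++ [a]) = {g | ∃ q, M.Reads p w q ∧ g ∈ M.readOutput q a} := by
  ext g
  simp only [beh, readOutput, Set.mem_ofPred_eq, List.append_eq_nil_iff, List.cons_ne_nil,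
    and_false, false_and, false_or, List.append_singleton_inj]
  grind

theorem Gfun_runT_epsClSet (w : List σ) (a : σ) :
    M.Gfun (M.runT (M.epsClSet M.I) w) a = M.machineBeh (w ++ [a]) := by
  ext g
  simp [Gfun_eq_biUnion, runT_epsClSet, machineBeh, beh_append_singleton]

theorem runTC_epsClSet (w : List σ) :
    M.runTC (M.epsClSet M.I) w = ⋃ (u) (v) (_ : w = u ++ v), M.runT (M.epsClSet M.I) v := by
  induction w using List.reverseRecOn with
  | nil => simp [runTC, runT]
  | append_singleton w a ih =>
    rw [runTC_append_singleton, TCfun, ih]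
    ext q
    simp only [Tfun_iUnion, Set.mem_union, Set.mem_iUnion]
    constructor
    · rintro (⟨u, v, rfl, hq⟩ | hq)
      · exact ⟨u, v ++ [a], by simp, by rwa [runT_append_singleton]⟩
      · exact ⟨w ++ [a], [], by simp, hq⟩
    · rintro ⟨u, v, huv, hq⟩
      rcases v.eq_nil_or_concat with rfl | ⟨v, b, rfl⟩
      · exact Or.inr hq
      · rw [List.concat_eq_append, ← List.append_assoc, List.append_singleton_inj] at huv
        obtain ⟨rfl, rfl⟩ := huv
        rw [List.concat_eq_append, runT_append_singleton] at hq
        exact Or.inl ⟨u, v, rfl, hq⟩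

theorem subsetTCBeh_eq (w : List σ) :
    M.subsetTCBeh w = {g | ∃ u v, w = u ++ v ∧ v ≠ [] ∧ g ∈ M.machineBeh v} := by
  ext g
  simp only [subsetTCBeh, runTC_epsClSet, Gfun_iUnion, Gfun_runT_epsClSet, Set.mem_iUnion,
    Set.mem_ofPred_eq]
  constructor
  · rintro ⟨-, a, rfl, u, v, rfl, hg⟩
    exact ⟨u, v ++ [a], by simp, by simp, hg⟩
  · rintro ⟨u, v, rfl, hv, hg⟩
    rcases v.eq_nil_or_concat with rfl | ⟨v, a, rfl⟩
    · exact absurd rfl hv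
    · rw [List.concat_eq_append] at hg
      exact ⟨u ++ v, a, by simp, u, v, rfl, hg⟩

end FST

theorem rBeh_nil {σ γ : Type} (e : RegularExpression (σ × Option γ)) : rBeh e [] = ∅ := by
  simp [rBeh]

theorem stmt14_general {Q σ γ : Type} (M : FST Q σ γ) (e : RegularExpression (σ × Option γ))
    (he : ∀ w : List σ, M.machineBeh w = rBeh e w) :
    ∀ w : List σ, M.subsetTCBeh w =
      {g | ∃ w' w'' : List σ, w = w' ++ w'' ∧ g ∈ rBeh e w''} := by
  intro w
  ext g
  simp only [M.subsetTCBeh_eq, he, Set.mem_ofPred_eq]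
  refine exists₂_congr fun u v => and_congr_right fun _ => ?_
  refine ⟨fun h => h.2, fun h => ⟨?_, h⟩⟩
  rintro rfl
  simp [rBeh_nil] at h

/-- For any FST `M` whose behaviour is that of the pattern regexp `e`
(as obtained by Thompson's construction) and which emits no output before reading input, the
Mealy machine computed by `subsetTC` performs complete regexp matching of `e`: its output on
any `w` is the union over all decompositions `w = w'·w''` of `B(e)(w'')`. -/
theorem stmt14 {Q σ γ : Type} (M : FST Q σ γ) (e : RegularExpression (σ × Option γ))
    (h0 : ∀ p ∈ M.I, M.behNil p = ∅)
    (he : ∀ w : List σ, M.machineBeh w = rBeh e w) :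
    ∀ w : List σ, M.subsetTCBeh w =
      {g | ∃ w' w'' : List σ, w = w' ++ w'' ∧ g ∈ rBeh e w''} :=
  stmt14_general M e he
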